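/- arXiv:1110.0226 — 6 statements merged into one kernel-verified Lean document; each statement's English description precedes it below -/
import Mathlib

section
/- With 𝔰_i defined recursively from x as below, one has ⁅𝔰_i, 𝔰_j⁆ ⊆ 𝔰_{i+j} for all i, j ≥ -1; consequently 𝔰 = Σ_{i≥-1} 𝔰_i is a graded Lie subalgebra of 𝔤, and for every k ≥ 0 the subspace 𝔥^{(k)} := 𝔰_0 + 𝔰_1 + ⋯ + 𝔰_k + Σ_{i>k} 𝔤_i is a Lie subalgebra of 𝔤. -/
/-! Since `ad x` is a derivation, `ad x ⁅u, v⁆ = ⁅ad x u, v⁆ + ⁅u, ad x v⁆`, so induction on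
`m + n` gives `⁅sAux m, sAux n⁆ ⊆ sAux (m + n - 1)`, i.e. `⁅𝔰_i, 𝔰_j⁆ ⊆ 𝔰_{i+j}`; the only
exception is `i = j = -1`, where the bracket vanishes as `𝔰_{-1}` is a line. A sum of subspaces is
closed under the bracket as soon as the brackets of its summands land in it, and for `𝔥^{(k)}`
the summands of degree `> k` are absorbed by the grading. -/

/-- The recursively defined subspaces `𝔰_{i}` re-indexed by `ℕ`: `sAux 0 = 𝔰_{-1} = K·x`,
and `sAux (n+1) = 𝔰_n = {u ∈ 𝔤_n : ⁅x,u⁆ ∈ 𝔰_{n-1}}`. -/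
noncomputable def sAux {K L : Type*} [Field K] [LieRing L] [LieAlgebra K L]
    (g : ℤ → Submodule K L) (x : L) : ℕ → Submodule K L
  | 0 => Submodule.span K {x}
  | (n + 1) => g (n : ℤ) ⊓ (sAux g x n).comap (LieAlgebra.ad K L x)

/-- The subspaces `𝔰_i ⊆ 𝔤_i`: `𝔰_i = 0` for `i ≤ -2`, `𝔰_{-1} = K·x`, and
`𝔰_i = {u ∈ 𝔤_i : ⁅x,u⁆ ∈ 𝔰_{i-1}}` for `i ≥ 0`. -/
noncomputable def sFun {K L : Type*} [Field K] [LieRing L] [LieAlgebra K L]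
    (g : ℤ → Submodule K L) (x : L) (i : ℤ) : Submodule K L :=
  if i < -1 then ⊥ else sAux g x (i + 1).toNat

theorem Submodule.forall_lie_mem_iff_map₂_ad_le {K L : Type*} [CommRing K] [LieRing L]
    [LieAlgebra K L] {p q r : Submodule K L} :
    (∀ u ∈ p, ∀ v ∈ q, ⁅u, v⁆ ∈ r) ↔
      Submodule.map₂ (LieAlgebra.ad K L : L →ₗ[K] Module.End K L) p q ≤ r := by
  simp [Submodule.map₂_le]

section

variable {K L : Type*} [Field K] [LieRing L] [LieAlgebra K L] {g : ℤ → Submodule K L} {x : L}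

theorem mem_sAux_succ {n : ℕ} {u : L} :
    u ∈ sAux g x (n + 1) ↔ u ∈ g n ∧ ⁅x, u⁆ ∈ sAux g x n :=
  Iff.rfl

theorem lie_eq_zero_of_mem_sAux_zero {u v : L} (hu : u ∈ sAux g x 0) (hv : v ∈ sAux g x 0) :
    ⁅u, v⁆ = 0 := by
  obtain ⟨a, rfl⟩ := Submodule.mem_span_singleton.mp hu
  obtain ⟨b, rfl⟩ := Submodule.mem_span_singleton.mp hv
  simp

theorem lie_mem_sAux_pred_of_mem_sAux_zero {n : ℕ} {u v : L} (hu : u ∈ sAux g x 0)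
    (hv : v ∈ sAux g x n) : ⁅u, v⁆ ∈ sAux g x (n - 1) := by
  cases n with
  | zero => simp [lie_eq_zero_of_mem_sAux_zero hu hv]
  | succ n =>
    obtain ⟨a, rfl⟩ := Submodule.mem_span_singleton.mp hu
    simpa only [smul_lie, Nat.add_sub_cancel] using Submodule.smul_mem _ a (mem_sAux_succ.mp hv).2

theorem lie_mem_sAux (hbr : ∀ i j : ℤ, ∀ u ∈ g i, ∀ v ∈ g j, ⁅u, v⁆ ∈ g (i + j)) :
    ∀ (m n : ℕ) {u v : L}, u ∈ sAux g x m → v ∈ sAux g x n → ⁅u, v⁆ ∈ sAux g x (m + n - 1)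
  | 0, n, _, _, hu, hv => by simpa using lie_mem_sAux_pred_of_mem_sAux_zero hu hv
  | m + 1, 0, u, v, hu, hv => by
    rw [← lie_skew]
    simpa using neg_mem (lie_mem_sAux_pred_of_mem_sAux_zero hv hu)
  | m + 1, n + 1, u, v, hu, hv => by
    rw [show m + 1 + (n + 1) - 1 = m + n + 1 by omega, mem_sAux_succ]
    refine ⟨by exact_mod_cast hbr m n u (mem_sAux_succ.mp hu).1 v (mem_sAux_succ.mp hv).1, ?_⟩
    rw [leibniz_lie]
    exact add_mem (by simpa using lie_mem_sAux hbr m (n + 1) (mem_sAux_succ.mp hu).2 hv)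
      (by simpa using lie_mem_sAux hbr (m + 1) n hu (mem_sAux_succ.mp hv).2)

theorem sFun_of_lt {i : ℤ} (hi : i < -1) : sFun g x i = ⊥ :=
  if_pos hi

theorem sFun_of_le {i : ℤ} (hi : -1 ≤ i) : sFun g x i = sAux g x (i + 1).toNat :=
  if_neg (by omega)

theorem sFun_le {i : ℤ} (hi : 0 ≤ i) : sFun g x i ≤ g i := by
  rw [sFun_of_le (by omega), show (i + 1).toNat = i.toNat + 1 by omega]
  intro u hu
  simpa [hi] using (mem_sAux_succ.mp hu).1

theorem lie_mem_sFun (hbr : ∀ i j : ℤ, ∀ u ∈ g i, ∀ v ∈ g j, ⁅u, v⁆ ∈ g (i + j)) {i j : ℤ}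
    (hi : -1 ≤ i) (hj : -1 ≤ j) {u v : L} (hu : u ∈ sFun g x i) (hv : v ∈ sFun g x j) :
    ⁅u, v⁆ ∈ sFun g x (i + j) := by
  rw [sFun_of_le hi] at hu
  rw [sFun_of_le hj] at hv
  rcases lt_or_ge (i + j) (-1) with hij | hij
  · obtain ⟨rfl, rfl⟩ : i = -1 ∧ j = -1 := by omega
    simp [lie_eq_zero_of_mem_sAux_zero hu hv]
  · rw [sFun_of_le hij]
    convert lie_mem_sAux hbr _ _ hu hv using 2
    omega

theorem sFun_le_iSup (i : ℤ) : sFun g x i ≤ ⨆ j ≥ (-1 : ℤ), sFun g x j := by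
  rcases lt_or_ge i (-1) with hi | hi
  · simp [sFun_of_lt hi]
  · exact le_iSup₂_of_le i hi le_rfl

theorem lie_mem_iSup_sFun (hbr : ∀ i j : ℤ, ∀ u ∈ g i, ∀ v ∈ g j, ⁅u, v⁆ ∈ g (i + j)) :
    ∀ u ∈ ⨆ i ≥ (-1 : ℤ), sFun g x i, ∀ v ∈ ⨆ i ≥ (-1 : ℤ), sFun g x i,
      ⁅u, v⁆ ∈ ⨆ i ≥ (-1 : ℤ), sFun g x i := by
  refine Submodule.forall_lie_mem_iff_map₂_ad_le.mpr ?_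
  simp only [Submodule.map₂_iSup_left, Submodule.map₂_iSup_right, iSup_le_iff,
    ← Submodule.forall_lie_mem_iff_map₂_ad_le]
  exact fun j hj i hi u hu v hv => sFun_le_iSup _ (lie_mem_sFun hbr hi hj hu hv)

theorem lie_mem_iSup_sFun_Icc_sup_iSup_gt
    (hbr : ∀ i j : ℤ, ∀ u ∈ g i, ∀ v ∈ g j, ⁅u, v⁆ ∈ g (i + j)) {k : ℤ} (hk : 0 ≤ k) :
    ∀ u ∈ (⨆ i ∈ Set.Icc (0 : ℤ) k, sFun g x i) ⊔ ⨆ i > k, g i,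
    ∀ v ∈ (⨆ i ∈ Set.Icc (0 : ℤ) k, sFun g x i) ⊔ ⨆ i > k, g i,
      ⁅u, v⁆ ∈ (⨆ i ∈ Set.Icc (0 : ℤ) k, sFun g x i) ⊔ ⨆ i > k, g i := by
  refine Submodule.forall_lie_mem_iff_map₂_ad_le.mpr ?_
  simp only [Submodule.map₂_sup_left, Submodule.map₂_sup_right, Submodule.map₂_iSup_left,
    Submodule.map₂_iSup_right, sup_le_iff, iSup_le_iff, ← Submodule.forall_lie_mem_iff_map₂_ad_le]
  set H := (⨆ i ∈ Set.Icc (0 : ℤ) k, sFun g x i) ⊔ ⨆ i > k, g i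
  have hg : ∀ i > k, g i ≤ H := fun i hi => le_sup_of_le_right (le_iSup₂_of_le i hi le_rfl)
  have hs : ∀ i ≥ 0, sFun g x i ≤ H := fun i hi => by
    rcases le_or_gt i k with hik | hik
    · exact le_sup_of_le_left (le_iSup₂_of_le i ⟨hi, hik⟩ le_rfl)
    · exact (sFun_le hi).trans (hg i hik)
  have hgg : ∀ i ≥ 0, ∀ j ≥ 0, k < i ∨ k < j → ∀ u ∈ g i, ∀ v ∈ g j, ⁅u, v⁆ ∈ H :=
    fun i hi j hj hij u hu v hv => hg (i + j) (by omega) (hbr i j u hu v hv)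
  refine ⟨fun j ⟨hj, _⟩ => ⟨fun i ⟨hi, _⟩ u hu v hv => ?_, fun i hi u hu v hv => ?_⟩,
    fun j hj => ⟨fun i ⟨hi, _⟩ u hu v hv => ?_, fun i hi u hu v hv => ?_⟩⟩
  · exact hs _ (by omega) (lie_mem_sFun hbr (by omega) (by omega) hu hv)
  · exact hgg i (by omega) j hj (.inl hi) u hu v (sFun_le hj hv)
  · exact hgg i hi j (by omega) (.inr hj) u (sFun_le hi hu) v hv
  · exact hgg i (by omega) j (by omega) (.inl hi) u hu v hv

end

theorem stmt0_general {K L : Type*} [Field K] [LieRing L] [LieAlgebra K L]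
    (g : ℤ → Submodule K L)
    (hbr : ∀ i j : ℤ, ∀ u ∈ g i, ∀ v ∈ g j, ⁅u, v⁆ ∈ g (i + j))
    (x : L) :
    (∀ i j : ℤ, -1 ≤ i → -1 ≤ j →
        ∀ u ∈ sFun g x i, ∀ v ∈ sFun g x j, ⁅u, v⁆ ∈ sFun g x (i + j)) ∧
    (∀ u ∈ ⨆ i ≥ (-1 : ℤ), sFun g x i, ∀ v ∈ ⨆ i ≥ (-1 : ℤ), sFun g x i,
        ⁅u, v⁆ ∈ ⨆ i ≥ (-1 : ℤ), sFun g x i) ∧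
    (∀ k : ℤ, 0 ≤ k →
        ∀ u ∈ (⨆ i ∈ Set.Icc (0 : ℤ) k, sFun g x i) ⊔ ⨆ i > k, g i,
        ∀ v ∈ (⨆ i ∈ Set.Icc (0 : ℤ) k, sFun g x i) ⊔ ⨆ i > k, g i,
        ⁅u, v⁆ ∈ (⨆ i ∈ Set.Icc (0 : ℤ) k, sFun g x i) ⊔ ⨆ i > k, g i) :=
  ⟨fun _ _ hi hj _ hu _ hv => lie_mem_sFun hbr hi hj hu hv, lie_mem_iSup_sFun hbr,
    fun _ hk => lie_mem_iSup_sFun_Icc_sup_iSup_gt hbr hk⟩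

theorem stmt0 {K L : Type*} [Field K] [CharZero K] [LieRing L] [LieAlgebra K L]
    [FiniteDimensional K L]
    (g : ℤ → Submodule K L)
    (hdsum : DirectSum.IsInternal g)
    (hfin : {i : ℤ | g i ≠ ⊥}.Finite)
    (hbr : ∀ i j : ℤ, ∀ u ∈ g i, ∀ v ∈ g j, ⁅u, v⁆ ∈ g (i + j))
    (x : L) (hx : x ∈ g (-1)) :
    (∀ i j : ℤ, -1 ≤ i → -1 ≤ j →
        ∀ u ∈ sFun g x i, ∀ v ∈ sFun g x j, ⁅u, v⁆ ∈ sFun g x (i + j)) ∧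
    (∀ u ∈ ⨆ i ≥ (-1 : ℤ), sFun g x i, ∀ v ∈ ⨆ i ≥ (-1 : ℤ), sFun g x i,
        ⁅u, v⁆ ∈ ⨆ i ≥ (-1 : ℤ), sFun g x i) ∧
    (∀ k : ℤ, 0 ≤ k →
        ∀ u ∈ (⨆ i ∈ Set.Icc (0 : ℤ) k, sFun g x i) ⊔ ⨆ i > k, g i,
        ∀ v ∈ (⨆ i ∈ Set.Icc (0 : ℤ) k, sFun g x i) ⊔ ⨆ i > k, g i,
        ⁅u, v⁆ ∈ (⨆ i ∈ Set.Icc (0 : ℤ) k, sFun g x i) ⊔ ⨆ i > k, g i) :=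
  stmt0_general g hbr x
end

section
/- Let W be a normalization space and let U ⊆ 𝔤 be a subspace such that gr_i U = 𝔰_i for every i ∈ ℤ, where gr_i U denotes the image of U ∩ 𝔤^{(i)} under the projection of 𝔤^{(i)} onto 𝔤_i along ⊕_{j>i} 𝔤_j. If x̄ = x + Σ_{i≥0} x_i and x̄' = x + Σ_{i≥0} x_i' both belong to U, with x_i, x_i' ∈ W_i for all i ≥ 0, then x_i = x_i' for all i ≥ 0 (hence x̄ = x̄'). -/
theorem Function.HasFiniteSupport.eq_zero_of_forall_lt {ι M : Type*} [LinearOrder ι] [Zero M]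
    {y : ι → M} (hy : y.HasFiniteSupport) (hstep : ∀ i, (∀ j < i, y j = 0) → y i = 0) :
    y = 0 := by
  by_contra hne
  obtain ⟨i, hi⟩ := Set.Finite.exists_minimal hy (Function.support_nonempty_iff.mpr hne)
  exact hi.1 (hstep i fun j hji => by_contra fun hj => (hi.2 hj hji.le).not_gt hji)

section Filtration

variable {R M : Type*} [Semiring R] [AddCommGroup M] [Module R M]

theorem Function.support_subset_setOf_ne_bot {ι : Type*} {g : ι → Submodule R M} {y : ι → M}
    (hy : ∀ j, y j ∈ g j) : y.support ⊆ {j | g j ≠ ⊥} :=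
  fun j hj hgj => hj (by simpa [hgj] using hy j)

theorem finsum_mem_iSup_ge {ι : Type*} [LinearOrder ι] {g : ι → Submodule R M} {y : ι → M}
    {i : ι} (hy : ∀ j, y j ∈ g j) (hlow : ∀ j < i, y j = 0) : ∑ᶠ j, y j ∈ ⨆ j ≥ i, g j := by
  refine finsum_induction (· ∈ ⨆ j ≥ i, g j) (zero_mem _) (fun _ _ => add_mem) fun j => ?_
  obtain hj | hj := lt_or_ge j i
  · simp [hlow j hj]
  · exact Submodule.mem_iSup_of_mem j (Submodule.mem_iSup_of_mem hj (hy j))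

theorem finsum_sub_mem_iSup_ge_add_one {g : ℤ → Submodule R M} {y : ℤ → M} {i : ℤ}
    (hfin : y.HasFiniteSupport) (hy : ∀ j, y j ∈ g j) (hlow : ∀ j < i, y j = 0) :
    ∑ᶠ j, y j - y i ∈ ⨆ j ≥ i + 1, g j := by
  rw [← add_finsum_cond_ne i hfin, add_sub_cancel_left]
  refine finsum_mem_iSup_ge (i := i + 1)
    (fun j => finsum_induction (· ∈ g j) (zero_mem _) (fun _ _ => add_mem) fun _ => hy j)
    fun j hj => by
      obtain hji | rfl := (Int.lt_add_one_iff.mp hj).lt_or_eq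
      · simp [hlow j hji]
      · simp

def gr (g : ℤ → Submodule R M) (U : Submodule R M) (i : ℤ) : Set M :=
  {w | w ∈ g i ∧ ∃ u, (u ∈ U ∧ u ∈ ⨆ j ≥ i, g j) ∧ u - w ∈ ⨆ j ≥ i + 1, g j}

theorem mem_gr_of_finsum_mem {g : ℤ → Submodule R M} {U : Submodule R M} {y : ℤ → M} {i : ℤ}
    (hU : ∑ᶠ j, y j ∈ U) (hfin : y.HasFiniteSupport) (hy : ∀ j, y j ∈ g j)
    (hlow : ∀ j < i, y j = 0) : y i ∈ gr g U i :=
  ⟨hy i, _, ⟨hU, finsum_mem_iSup_ge hy hlow⟩, finsum_sub_mem_iSup_ge_add_one hfin hy hlow⟩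

end Filtration

theorem stmt1_general {K L : Type*} [Field K] [LieRing L] [LieAlgebra K L]
    (g : ℤ → Submodule K L)
    (hfin : {i : ℤ | g i ≠ ⊥}.Finite)
    (x : L)
    -- `W` is a normalization space:
    (W : ℤ → Submodule K L) (hW : ∀ i : ℤ, 0 ≤ i → W i ≤ g i)
    (hWcompl : ∀ i : ℤ, 0 ≤ i →
      W i ⊓ (sFun g x i ⊔ Submodule.map (LieAlgebra.ad K L x) (g (i + 1))) = ⊥ ∧
      W i ⊔ (sFun g x i ⊔ Submodule.map (LieAlgebra.ad K L x) (g (i + 1))) = g i)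
    -- `U ⊆ 𝔤` is a subspace with `gr_i U = 𝔰_i` for all `i`:
    (U : Submodule K L)
    (hgr : ∀ i : ℤ,
      {w : L | w ∈ g i ∧ ∃ u, (u ∈ U ∧ u ∈ ⨆ j ≥ i, g j) ∧ u - w ∈ ⨆ j ≥ i + 1, g j} =
      {w : L | w ∈ sFun g x i})
    -- the two elements `x̄ = x + Σ_{i ≥ 0} x_i` and `x̄' = x + Σ_{i ≥ 0} x_i'` of `U`:
    (xi xi' : ℤ → L)
    (hxi : ∀ i : ℤ, 0 ≤ i → xi i ∈ W i) (hxineg : ∀ i : ℤ, i < 0 → xi i = 0)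
    (hxi' : ∀ i : ℤ, 0 ≤ i → xi' i ∈ W i) (hxineg' : ∀ i : ℤ, i < 0 → xi' i = 0)
    (hxbar : x + ∑ᶠ i : ℤ, xi i ∈ U)
    (hxbar' : x + ∑ᶠ i : ℤ, xi' i ∈ U) :
    ∀ i : ℤ, xi i = xi' i := by
  have mem_g : ∀ z : ℤ → L, (∀ i, 0 ≤ i → z i ∈ W i) → (∀ i < 0, z i = 0) → ∀ i, z i ∈ g i :=
    fun z hzW hzneg i => by
      obtain hi | hi := lt_or_ge i 0
      · simp [hzneg i hi]
      · exact hW i hi (hzW i hi)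
  have finite_support : ∀ z : ℤ → L, (∀ i, z i ∈ g i) → z.HasFiniteSupport :=
    fun z hz => hfin.subset (Function.support_subset_setOf_ne_bot hz)
  have hxig := mem_g xi hxi hxineg
  have hxig' := mem_g xi' hxi' hxineg'
  set y := xi - xi'
  have hyg : ∀ i, y i ∈ g i := fun i => (g i).sub_mem (hxig i) (hxig' i)
  have hyU : ∑ᶠ i, y i ∈ U := by
    simpa [y, finsum_sub_distrib (finite_support _ hxig) (finite_support _ hxig')]
      using U.sub_mem hxbar hxbar'
  have hy : y = 0 := (finite_support y hyg).eq_zero_of_forall_lt fun i hlow => by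
    obtain hi | hi := lt_or_ge i 0
    · simp [y, hxineg i hi, hxineg' i hi]
    have hys : y i ∈ sFun g x i :=
      (hgr i).subset (mem_gr_of_finsum_mem hyU (finite_support y hyg) hyg hlow)
    exact Submodule.disjoint_def.mp (disjoint_iff.mpr (hWcompl i hi).1) _
      ((W i).sub_mem (hxi i hi) (hxi' i hi)) (Submodule.mem_sup_left hys)
  exact fun i => sub_eq_zero.mp (congrFun hy i)

theorem stmt1 {K L : Type*} [Field K] [CharZero K] [LieRing L] [LieAlgebra K L]
    [FiniteDimensional K L]
    (g : ℤ → Submodule K L)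
    (hdsum : DirectSum.IsInternal g)
    (hfin : {i : ℤ | g i ≠ ⊥}.Finite)
    (hbr : ∀ i j : ℤ, ∀ u ∈ g i, ∀ v ∈ g j, ⁅u, v⁆ ∈ g (i + j))
    (x : L) (hx : x ∈ g (-1))
    -- `W` is a normalization space:
    (W : ℤ → Submodule K L) (hW : ∀ i : ℤ, 0 ≤ i → W i ≤ g i)
    (hWcompl : ∀ i : ℤ, 0 ≤ i →
      W i ⊓ (sFun g x i ⊔ Submodule.map (LieAlgebra.ad K L x) (g (i + 1))) = ⊥ ∧
      W i ⊔ (sFun g x i ⊔ Submodule.map (LieAlgebra.ad K L x) (g (i + 1))) = g i)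
    -- `U ⊆ 𝔤` is a subspace with `gr_i U = 𝔰_i` for all `i`:
    (U : Submodule K L)
    (hgr : ∀ i : ℤ,
      {w : L | w ∈ g i ∧ ∃ u, (u ∈ U ∧ u ∈ ⨆ j ≥ i, g j) ∧ u - w ∈ ⨆ j ≥ i + 1, g j} =
      {w : L | w ∈ sFun g x i})
    -- the two elements `x̄ = x + Σ_{i ≥ 0} x_i` and `x̄' = x + Σ_{i ≥ 0} x_i'` of `U`:
    (xi xi' : ℤ → L)
    (hxi : ∀ i : ℤ, 0 ≤ i → xi i ∈ W i) (hxineg : ∀ i : ℤ, i < 0 → xi i = 0)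
    (hxi' : ∀ i : ℤ, 0 ≤ i → xi' i ∈ W i) (hxineg' : ∀ i : ℤ, i < 0 → xi' i = 0)
    (hxbar : x + ∑ᶠ i : ℤ, xi i ∈ U)
    (hxbar' : x + ∑ᶠ i : ℤ, xi' i ∈ U) :
    ∀ i : ℤ, xi i = xi' i :=
  stmt1_general g hfin x W hW hWcompl U hgr xi xi' hxi hxineg hxi' hxineg' hxbar hxbar'
end

section
/- M is the internal direct sum of ker(ρ(e)) and range(ρ(f)), where ρ(z) : M → M denotes the action m ↦ z • m; that is, every finite-dimensional module over a Lie algebra containing an sl₂-triple (h, e, f) decomposes as the direct sum of the kernel of the raising operator and the image of the lowering operator. -/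
/-!
Both `e` and `f` act nilpotently, because `X ↦ ρ(h) X - X ρ(h)` has the distinct eigenvalues `2n`
on the nonzero powers of `ρ(e)`. The relation `e fⁿ⁺¹ = fⁿ⁺¹ e + (n + 1) fⁿ (h - n)` shows, by
induction on `n`, that `∏_{j<n} (h - j)` maps a vector `m` into an `sl₂`-stable subspace `P` as
soon as `e m` and `fⁿ m` lie in `P`. With `P = 0` this makes `h` act on `ker e ∩ range f` as a
split operator with roots in `ℕ`, so it suffices to rule out a vector `v = f w` of weight `k ∈ ℕ`
killed by `e`. Taking for `P` the `f`-string of `v` and using the opposite triple `(-h, f, e)`, we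
get `∏_{j<S} (-h - j) w ∈ P`; applying `f` puts a nonzero multiple of `v` into `f(P)`, which is
spanned by eigenvectors of weights `k - 2, k - 4, …`, so `v = 0`. The same holds with `e` and `f`
swapped, and a dimension count then shows that `ker e + range f` is everything.
-/

open LieModule Module Polynomial

theorem SemiconjBy.aeval {R A : Type*} [CommSemiring R] [Semiring A] [Algebra R A] {a x y : A}
    (h : SemiconjBy a x y) (p : R[X]) : SemiconjBy a (aeval x p) (aeval y p) := by
  induction p using Polynomial.induction_on' with
  | add p q hp hq => simpa only [map_add] using hp.add_right hq
  | monomial n c =>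
    simpa only [aeval_monomial] using
      SemiconjBy.mul_right (Algebra.commute_algebraMap_right c a) (h.pow_right n)

namespace Module.End

variable {K M : Type*} [Field K] [AddCommGroup M] [Module K M]

theorem isNilpotent_of_mul_sub_mul_eq_smul [CharZero K] [FiniteDimensional K M] {A B : End K M}
    {c : K} (hc : c ≠ 0) (h : A * B - B * A = c • B) : IsNilpotent B := by
  have hpow (n : ℕ) : A * B ^ n - B ^ n * A = ((n : K) * c) • B ^ n := by
    induction n with
    | zero => simp
    | succ n ih =>
      calc A * B ^ (n + 1) - B ^ (n + 1) * A
          = (A * B ^ n - B ^ n * A) * B + B ^ n * (A * B - B * A) := by noncomm_ring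
        _ = _ := by
          rw [ih, h, smul_mul_assoc, mul_smul_comm, ← pow_succ, ← add_smul]
          push_cast
          ring_nf
  by_contra hB
  have hev (n : ℕ) :
      HasEigenvalue (LinearMap.mulLeft K A - LinearMap.mulRight K A) ((n : K) * c) :=
    hasEigenvalue_of_hasEigenvector
      ⟨mem_eigenspace_iff.mpr (by simpa using hpow n), fun h0 ↦ hB ⟨n, h0⟩⟩
  exact Set.infinite_of_injective_forall_mem (fun m n hmn ↦ by simpa [hc] using hmn) hev
    (finite_hasEigenvalue _)

theorem eq_zero_of_aeval_descPochhammer_apply_eq_zero {H : End K M} {N : Submodule K M}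
    (hN : N ∈ H.invtSubmodule) (hNH : ∀ j : ℕ, ∀ x ∈ N, H x = (j : K) • x → x = 0) (n : ℕ)
    {x : M} (hx : x ∈ N) (h : aeval H (descPochhammer K n) x = 0) : x = 0 := by
  induction n generalizing x with
  | zero => simpa using h
  | succ n ih =>
    rw [descPochhammer_succ_right, aeval_mul, mul_apply] at h
    have hsub : H x - (n : K) • x ∈ N := sub_mem (hN hx) (N.smul_mem _ hx)
    refine hNH n x hx (sub_eq_zero.mp (ih hsub ?_))
    simpa [Algebra.algebraMap_eq_smul_one, Nat.cast_smul_eq_nsmul] using h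

end Module.End

theorem LinearMap.ker_sup_range_eq_top_of_inf_eq_bot {K M : Type*} [Field K] [AddCommGroup M]
    [Module K M] [FiniteDimensional K M] {E F : End K M} (hEF : ker E ⊓ range F = ⊥)
    (hFE : ker F ⊓ range E = ⊥) : ker E ⊔ range F = ⊤ := by
  refine Submodule.eq_top_of_finrank_eq (le_antisymm (Submodule.finrank_le _) ?_)
  have h₁ := Submodule.finrank_sup_add_finrank_inf_eq (ker E) (range F)
  have h₂ := Submodule.finrank_sup_add_finrank_inf_eq (ker F) (range E)
  rw [hEF, finrank_bot] at h₁
  rw [hFE, finrank_bot] at h₂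
  have := Submodule.finrank_le (ker F ⊔ range E)
  have := finrank_range_add_finrank_ker E
  have := finrank_range_add_finrank_ker F
  omega

namespace IsSl2Triple

variable {K L M : Type*} [Field K] [LieRing L] [LieAlgebra K L]
  [AddCommGroup M] [Module K M] [LieRingModule L M] [LieModule K L M] {h e f : L}

lemma lie_e_lie_h (t : IsSl2Triple h e f) (m : M) :
    ⁅e, ⁅h, m⁆⁆ = ⁅h, ⁅e, m⁆⁆ - (2 : K) • ⁅e, m⁆ := by
  rw [leibniz_lie h e m, t.lie_h_e_smul K, smul_lie]
  abel

lemma isNilpotent_toEnd_e [CharZero K] [FiniteDimensional K M] (t : IsSl2Triple h e f) :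
    IsNilpotent (toEnd K L M e) := by
  refine Module.End.isNilpotent_of_mul_sub_mul_eq_smul (A := toEnd K L M h) two_ne_zero ?_
  ext m
  simp [t.lie_e_lie_h (K := K)]

lemma semiconjBy_toEnd_e_toEnd_h (t : IsSl2Triple h e f) :
    SemiconjBy (toEnd K L M e) (toEnd K L M h) (toEnd K L M h - 2) := by
  ext m
  simp [t.lie_e_lie_h (K := K), ofNat_smul_eq_nsmul]

lemma lie_h_pow_toEnd_f_apply (t : IsSl2Triple h e f) (n : ℕ) (m : M) :
    ⁅h, (toEnd K L M f ^ n) m⁆ = (toEnd K L M f ^ n) (⁅h, m⁆ - (2 * n : K) • m) := by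
  induction n with
  | zero => simp
  | succ n ih =>
    rw [pow_succ', Module.End.mul_apply, toEnd_apply_apply, leibniz_lie h, t.lie_lie_smul_f K, ih]
    simp only [Module.End.mul_apply, toEnd_apply_apply, neg_lie, smul_lie, map_sub, map_smul,
      lie_sub, lie_smul]
    push_cast
    module

lemma lie_e_pow_succ_toEnd_f_apply (t : IsSl2Triple h e f) (n : ℕ) (m : M) :
    ⁅e, (toEnd K L M f ^ (n + 1)) m⁆ = (toEnd K L M f ^ (n + 1)) ⁅e, m⁆ +
      (n + 1 : K) • (toEnd K L M f ^ n) (⁅h, m⁆ - (n : K) • m) := by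
  induction n with
  | zero =>
    simp only [zero_add, pow_one, pow_zero, toEnd_apply_apply, leibniz_lie e f, t.lie_e_f,
      Nat.cast_zero, zero_smul, sub_zero, one_smul, Module.End.one_apply]
    abel
  | succ n ih =>
    rw [pow_succ' _ (n + 1), Module.End.mul_apply, toEnd_apply_apply, leibniz_lie e f, t.lie_e_f,
      ih, t.lie_h_pow_toEnd_f_apply, pow_succ' _ n]
    simp only [Module.End.mul_apply, map_sub, map_smul, lie_add, lie_smul, lie_sub,
      toEnd_apply_apply]
    push_cast
    module

lemma aeval_descPochhammer_toEnd_h_apply_mem [CharZero K] (t : IsSl2Triple h e f)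
    {P : Submodule K M} (hPh : P ∈ (toEnd K L M h).invtSubmodule)
    (hPe : P ∈ (toEnd K L M e).invtSubmodule) (hPf : P ∈ (toEnd K L M f).invtSubmodule)
    (n : ℕ) {m : M} (hm : ⁅e, m⁆ ∈ P) (hfm : (toEnd K L M f ^ n) m ∈ P) :
    aeval (toEnd K L M h) (descPochhammer K n) m ∈ P := by
  induction n generalizing m with
  | zero => simpa using hfm
  | succ n ih =>
    have hX : aeval (toEnd K L M h) (X - (n : K[X])) m = ⁅h, m⁆ - (n : K) • m := by
      simp [Nat.cast_smul_eq_nsmul]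
    rw [descPochhammer_succ_right, aeval_mul, Module.End.mul_apply, hX]
    refine ih ?_ ?_
    · rw [lie_sub, lie_smul, t.lie_e_lie_h (K := K)]
      exact sub_mem (sub_mem (hPh hm) (P.smul_mem _ hm)) (P.smul_mem _ hm)
    · have hfe : (toEnd K L M f ^ (n + 1)) ⁅e, m⁆ ∈ P := by
        rw [Module.End.coe_pow]
        exact ((Module.End.mem_invtSubmodule_iff_mapsTo _).mp hPf).iterate (n + 1) hm
      have key := t.lie_e_pow_succ_toEnd_f_apply (K := K) n m
      rw [← sub_eq_iff_eq_add', ← inv_smul_eq_iff₀ (Nat.cast_add_one_ne_zero n)] at key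
      rw [← key]
      exact P.smul_mem _ (sub_mem (hPe hfm) hfe)

lemma mem_map_toEnd_f_of_mem_range [CharZero K] [FiniteDimensional K M] (t : IsSl2Triple h e f)
    {P : Submodule K M} (hPh : P ∈ (toEnd K L M h).invtSubmodule)
    (hPe : P ∈ (toEnd K L M e).invtSubmodule) (hPf : P ∈ (toEnd K L M f).invtSubmodule)
    {v : M} {k : ℕ} (hvP : v ∈ P) (hvh : ⁅h, v⁆ = (k : K) • v)
    (hvf : v ∈ LinearMap.range (toEnd K L M f)) : v ∈ P.map (toEnd K L M f) := by
  obtain ⟨w, hw⟩ := hvf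
  obtain ⟨S, hS⟩ := t.isNilpotent_toEnd_e (K := K) (M := M)
  have hPh' : P ∈ (toEnd K L M (-h)).invtSubmodule := fun x hx ↦ by
    simpa using P.neg_mem (hPh hx)
  have hq := t.symm.aeval_descPochhammer_toEnd_h_apply_mem hPh' hPf hPe S (m := w)
    (by simpa [← hw] using hvP) (by simp [hS])
  set p := descPochhammer K S
  have hfq : toEnd K L M f (aeval (toEnd K L M (-h)) p w) = p.eval (-(k : K) - 2) • v := by
    rw [← Module.End.mul_apply, ((t.symm.semiconjBy_toEnd_e_toEnd_h (M := M)).aeval p).eq,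
      Module.End.mul_apply, hw]
    refine Module.End.aeval_apply_of_mem_apply_eq_smul ?_
    simp only [map_neg, LinearMap.sub_apply, LinearMap.neg_apply, toEnd_apply_apply, hvh,
      End.ofNat_apply]
    module
  have hp : p.eval (-(k : K) - 2) ≠ 0 := by
    rw [descPochhammer_eval_eq_prod_range, Finset.prod_ne_zero_iff]
    intro j _
    have : ((k + 2 + j : ℕ) : K) ≠ 0 := Nat.cast_ne_zero.mpr (by omega)
    contrapose! this
    push_cast
    linear_combination -this
  rw [← inv_smul_smul₀ hp v, ← hfq]
  exact Submodule.smul_mem _ _ (Submodule.mem_map_of_mem hq)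

lemma eq_zero_of_mem_range_toEnd_f [CharZero K] [FiniteDimensional K M] (t : IsSl2Triple h e f)
    {v : M} {k : ℕ} (hve : ⁅e, v⁆ = 0) (hvh : ⁅h, v⁆ = (k : K) • v)
    (hvf : v ∈ LinearMap.range (toEnd K L M f)) : v = 0 := by
  set F := toEnd K L M f
  set H := toEnd K L M h
  have hHF (i : ℕ) : H ((F ^ i) v) = ((k : K) - 2 * i) • (F ^ i) v := by
    rw [toEnd_apply_apply, t.lie_h_pow_toEnd_f_apply, hvh, ← sub_smul, map_smul]
  set P := Submodule.span K (Set.range fun i : ℕ ↦ (F ^ i) v)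
  have hmem (i : ℕ) : (F ^ i) v ∈ P := Submodule.subset_span ⟨i, rfl⟩
  have hP (A : Module.End K M) (hA : ∀ i, A ((F ^ i) v) ∈ P) : P ∈ A.invtSubmodule :=
    Submodule.span_le.mpr (Set.range_subset_iff.mpr hA)
  have hPh : P ∈ H.invtSubmodule := hP _ fun i ↦ by
    rw [hHF]
    exact P.smul_mem _ (hmem i)
  have hPf : P ∈ F.invtSubmodule := hP _ fun i ↦ by
    rw [← Module.End.mul_apply, ← pow_succ']
    exact hmem _
  have hPe : P ∈ (toEnd K L M e).invtSubmodule := hP _ fun i ↦ by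
    cases i with
    | zero => simp [hve]
    | succ i =>
      rw [toEnd_apply_apply, t.lie_e_pow_succ_toEnd_f_apply, hve, hvh, map_zero, zero_add,
        ← sub_smul, map_smul]
      exact P.smul_mem _ (P.smul_mem _ (hmem i))
  have hFP : P.map F ≤ ⨆ (μ : K) (_ : μ ≠ k), H.eigenspace μ := by
    rw [Submodule.map_span_le]
    rintro _ ⟨i, rfl⟩
    refine Submodule.mem_iSup_of_mem ((k : K) - 2 * (i + 1 : ℕ)) (Submodule.mem_iSup_of_mem ?_ ?_)
    · simpa using Nat.cast_add_one_ne_zero i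
    · rw [← Module.End.mul_apply, ← pow_succ', Module.End.mem_eigenspace_iff, hHF]
  exact Submodule.disjoint_def.mp (H.eigenspaces_iSupIndep (k : K)) v
    (Module.End.mem_eigenspace_iff.mpr hvh)
    (hFP (t.mem_map_toEnd_f_of_mem_range hPh hPe hPf (hmem 0) hvh hvf))

lemma ker_toEnd_e_inf_range_toEnd_f_eq_bot [CharZero K] [FiniteDimensional K M]
    (t : IsSl2Triple h e f) :
    LinearMap.ker (toEnd K L M e) ⊓ LinearMap.range (toEnd K L M f) = ⊥ := by
  set N := LinearMap.ker (toEnd K L M e) ⊓ LinearMap.range (toEnd K L M f)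
  have hN : N ∈ (toEnd K L M h).invtSubmodule := by
    rintro x ⟨hxe, y, rfl⟩
    refine ⟨?_, ⟨⁅h, y⁆ - (2 : K) • y, ?_⟩⟩
    · simp only [SetLike.mem_coe, LinearMap.mem_ker, toEnd_apply_apply] at hxe ⊢
      rw [t.lie_e_lie_h (K := K), hxe, lie_zero, smul_zero, sub_zero]
    · simpa using (t.lie_h_pow_toEnd_f_apply (K := K) 1 y).symm
  obtain ⟨T, hT⟩ := t.symm.isNilpotent_toEnd_e (K := K) (M := M)
  refine eq_bot_iff.mpr fun v hv ↦ (Submodule.mem_bot K).mpr ?_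
  refine Module.End.eq_zero_of_aeval_descPochhammer_apply_eq_zero hN
    (fun j x hx hxj ↦ t.eq_zero_of_mem_range_toEnd_f hx.1 hxj hx.2) T hv ?_
  simpa using t.aeval_descPochhammer_toEnd_h_apply_mem (Module.End.invtSubmodule.bot_mem _)
    (Module.End.invtSubmodule.bot_mem _) (Module.End.invtSubmodule.bot_mem _) T (m := v)
    (by simpa using hv.1) (by simp [hT])

lemma ker_toEnd_e_sup_range_toEnd_f_eq_top [CharZero K] [FiniteDimensional K M]
    (t : IsSl2Triple h e f) :
    LinearMap.ker (toEnd K L M e) ⊔ LinearMap.range (toEnd K L M f) = ⊤ :=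
  LinearMap.ker_sup_range_eq_top_of_inf_eq_bot t.ker_toEnd_e_inf_range_toEnd_f_eq_bot
    (by simpa using t.symm.ker_toEnd_e_inf_range_toEnd_f_eq_bot (K := K) (M := M))

end IsSl2Triple

theorem stmt4 {K L M : Type*} [Field K] [CharZero K] [LieRing L] [LieAlgebra K L]
    [AddCommGroup M] [Module K M] [LieRingModule L M] [LieModule K L M]
    [FiniteDimensional K M]
    -- an `sl₂`-triple `(h, e, f)` in `L`:
    (h e f : L)
    (hhe : ⁅h, e⁆ = (2 : K) • e) (hhf : ⁅h, f⁆ = (-2 : K) • f) (hef : ⁅e, f⁆ = h) :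
    -- `M` is the internal direct sum of `ker ρ(e)` and `range ρ(f)`:
    LinearMap.ker (LieModule.toEnd K L M e) ⊓ LinearMap.range (LieModule.toEnd K L M f) = ⊥ ∧
    LinearMap.ker (LieModule.toEnd K L M e) ⊔ LinearMap.range (LieModule.toEnd K L M f) = ⊤ := by
  rcases eq_or_ne h 0 with rfl | hh
  · have he : e = 0 := by simpa using hhe.symm
    have hf : f = 0 := by simpa using hhf.symm
    simp [he, hf]
  have t : IsSl2Triple h e f :=
    { h_ne_zero := hh
      lie_e_f := hef
      lie_h_e_nsmul := by rw [hhe, ofNat_smul_eq_nsmul]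
      lie_h_f_nsmul := by rw [hhf, neg_smul, ofNat_smul_eq_nsmul] }
  exact ⟨t.ker_toEnd_e_inf_range_toEnd_f_eq_bot, t.ker_toEnd_e_sup_range_toEnd_f_eq_top⟩
end

section
/- Let M ⊆ 𝔤 be a graded subspace (i.e., M = Σ_i (M ∩ 𝔤_i)) that is invariant under ad x, ad h, and ad y. Then M ∩ 𝔭 is the internal direct sum of {u ∈ M ∩ 𝔭 : ⁅u, y⁆ = 0} and ⁅x, M⁆ ∩ 𝔭; in particular the space of y-annihilated vectors of M of nonnegative degree is a complement to ⁅x, M⁆ in M ∩ 𝔭. -/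
/-- The subspace `{u ∈ L : ⁅u, y⁆ = 0}`. -/
def kerRight {K L : Type*} [Field K] [LieRing L] [LieAlgebra K L] (y : L) :
    Submodule K L where
  carrier := {u : L | ⁅u, y⁆ = 0}
  zero_mem' := by simp
  add_mem' := by intro a b ha hb; rw [Set.mem_setOf_eq, add_lie, ha, hb, add_zero]
  smul_mem' := by intro c a ha; rw [Set.mem_setOf_eq, smul_lie, ha, smul_zero]

/-!
Write `E = ad y`, `F = ad x`, `H = ad h`. As `x` and `y` have nonzero degree and only finitely many
`𝔤_i` are nonzero, `E` and `F` are nilpotent, say `F ^ N = 0`. The `sl₂` relations then force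
`ker E ∩ im F = 0`: a vector `v` in it is killed by `∏_{j<N} (H - j)`, since `H - n` maps
`ker E ∩ ker F^(n+1)` into `ker F^n`, and by `∏_{j<N} (H + j + 2)`, since `H + n + 2` maps
`ker E ∩ im F^(n+1)` into `im F^(n+2)`; in characteristic zero these polynomials are coprime.
Symmetrically `ker F ∩ im E = 0`, and rank-nullity on the `E`, `F`-stable subspace `M` gives
`M = (M ∩ ker E) ⊕ F M`. Both summands are graded, so intersecting with `𝔭` distributes over
the sum.
-/

open Module LinearMap Polynomial DirectSum

/-- `IsSl2Triple H E F` for endomorphisms, except that `H = 0` is allowed. -/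
structure IsSl2Action {K V : Type*} [Field K] [AddCommGroup V] [Module K V]
    (H E F : Module.End K V) : Prop where
  lie_e_f : ⁅E, F⁆ = H
  lie_h_e : ⁅H, E⁆ = (2 : K) • E
  lie_h_f : ⁅H, F⁆ = (-2 : K) • F

namespace IsSl2Action

variable {K V : Type*} [Field K] [AddCommGroup V] [Module K V] {H E F : Module.End K V}
  (t : IsSl2Action H E F)
include t

theorem symm : IsSl2Action (-H) F E := by
  obtain ⟨hEF, hHE, hHF⟩ := t
  rw [Ring.lie_def] at hEF hHE hHF
  refine ⟨?_, ?_, ?_⟩ <;> rw [Ring.lie_def]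
  · rw [← hEF]; abel
  · rw [neg_mul, mul_neg, sub_neg_eq_add, neg_add_eq_sub, ← neg_sub, hHF]; module
  · rw [neg_mul, mul_neg, sub_neg_eq_add, neg_add_eq_sub, ← neg_sub, hHE]; module

theorem h_mul_f_pow (n : ℕ) : H * F ^ n = F ^ n * H - (2 * n : K) • F ^ n := by
  have hHF := t.lie_h_f
  rw [Ring.lie_def, sub_eq_iff_eq_add'] at hHF
  induction n with
  | zero => simp
  | succ n ih =>
    rw [pow_succ, ← mul_assoc, ih, sub_mul, mul_assoc, hHF]
    simp only [mul_add, mul_smul_comm, smul_mul_assoc, ← mul_assoc, ← pow_succ]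
    push_cast
    module

theorem e_mul_f_pow_succ (n : ℕ) :
    E * F ^ (n + 1) = F ^ (n + 1) * E + (n + 1 : K) • (F ^ n * H - (n : K) • F ^ n) := by
  have hEF := t.lie_e_f
  have hHF := t.lie_h_f
  rw [Ring.lie_def, sub_eq_iff_eq_add'] at hEF hHF
  induction n with
  | zero => simp [hEF]
  | succ n ih =>
    rw [pow_succ F (n + 1), ← mul_assoc, ih]
    simp only [add_mul, sub_mul, smul_mul_assoc, mul_assoc, hEF, hHF]
    simp only [mul_add, mul_smul_comm, ← mul_assoc, ← pow_succ]
    push_cast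
    module

theorem f_mul_e_mul_f_pow_succ (n : ℕ) :
    F * E * F ^ (n + 1) =
      F ^ (n + 2) * E + (n + 1 : K) • (H * F ^ (n + 1) + (n + 2 : K) • F ^ (n + 1)) := by
  rw [mul_assoc, t.e_mul_f_pow_succ, t.h_mul_f_pow]
  simp only [mul_add, mul_sub, mul_smul_comm, ← mul_assoc, ← pow_succ']
  push_cast
  module

theorem e_apply_h_add_smul_eq_zero {v : V} (hv : E v = 0) (c : K) : E (H v + c • v) = 0 := by
  have hHE := congrArg (· v) t.lie_h_e
  simp only [Ring.lie_def, LinearMap.sub_apply, Module.End.mul_apply, LinearMap.smul_apply, hv,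
    map_zero, smul_zero, zero_sub, neg_eq_zero] at hHE
  rw [map_add, map_smul, hHE, hv, smul_zero, add_zero]

variable [CharZero K]

theorem h_add_smul_mem_ker_inf_range_pow {n : ℕ} {v : V}
    (hv : v ∈ ker E ⊓ range (F ^ (n + 1))) :
    H v + (n + 2 : K) • v ∈ ker E ⊓ range (F ^ (n + 2)) := by
  obtain ⟨hvE, u, rfl⟩ := hv
  refine ⟨t.e_apply_h_add_smul_eq_zero hvE _, -(n + 1 : K)⁻¹ • E u, ?_⟩
  have key := congrArg (· u) (t.f_mul_e_mul_f_pow_succ n)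
  simp only [Module.End.mul_apply, LinearMap.add_apply, LinearMap.smul_apply] at key
  rw [show E ((F ^ (n + 1)) u) = 0 from hvE, map_zero] at key
  have hn : (n + 1 : K) ≠ 0 := by exact_mod_cast n.succ_ne_zero
  rw [map_smul, eq_neg_of_add_eq_zero_left key.symm, neg_smul_neg, inv_smul_smul₀ hn]

theorem f_pow_apply_h_sub_smul_eq_zero {n : ℕ} {v : V} (hvE : E v = 0)
    (hvF : (F ^ (n + 1)) v = 0) : (F ^ n) (H v - (n : K) • v) = 0 := by
  have key := congrArg (· v) (t.e_mul_f_pow_succ n)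
  simp only [Module.End.mul_apply, LinearMap.add_apply, LinearMap.smul_apply,
    LinearMap.sub_apply, hvE, hvF, map_zero, zero_add] at key
  have hn : (n + 1 : K) ≠ 0 := by exact_mod_cast n.succ_ne_zero
  rw [map_sub, map_smul]
  exact (smul_eq_zero.mp key.symm).resolve_left hn

theorem aeval_prod_X_add_C_mem_ker_inf_range_pow {v : V} (hv : v ∈ ker E ⊓ range F) (k : ℕ) :
    aeval H (∏ j ∈ Finset.range k, (X + C ((j : K) + 2))) v ∈
      ker E ⊓ range (F ^ (k + 1)) := by
  induction k with
  | zero => simpa using hv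
  | succ k ih =>
    rw [Finset.prod_range_succ, mul_comm, aeval_mul, Module.End.mul_apply, map_add (aeval H),
      aeval_X, aeval_C, LinearMap.add_apply, Module.algebraMap_end_apply]
    exact t.h_add_smul_mem_ker_inf_range_pow ih

theorem aeval_prod_X_sub_C_apply_eq_zero {n : ℕ} {v : V} (hvE : E v = 0) (hvF : (F ^ n) v = 0) :
    aeval H (∏ j ∈ Finset.range n, (X - C (j : K))) v = 0 := by
  induction n generalizing v with
  | zero => simpa using hvF
  | succ n ih =>
    rw [Finset.prod_range_succ, aeval_mul, Module.End.mul_apply, map_sub (aeval (R := K) H),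
      aeval_X, aeval_C, LinearMap.sub_apply, Module.algebraMap_end_apply]
    refine ih ?_ (t.f_pow_apply_h_sub_smul_eq_zero hvE hvF)
    rw [sub_eq_add_neg, ← neg_smul]
    exact t.e_apply_h_add_smul_eq_zero hvE _

theorem disjoint_ker_e_range_f (hF : IsNilpotent F) : Disjoint (ker E) (range F) := by
  obtain ⟨N, hN⟩ := hF
  have hcop : IsCoprime (∏ j ∈ Finset.range N, (X - C (j : K)))
      (∏ j ∈ Finset.range N, (X + C ((j : K) + 2))) := by
    refine IsCoprime.prod_left fun i _ ↦ IsCoprime.prod_right fun j _ ↦ ?_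
    rw [← sub_neg_eq_add, ← C_neg]
    refine isCoprime_X_sub_C_of_isUnit_sub (Ne.isUnit ?_)
    rw [sub_neg_eq_add]
    norm_cast
  refine disjoint_iff_inf_le.mpr fun v hv ↦
    (disjoint_ker_aeval_of_isCoprime H hcop).le_bot ⟨?_, ?_⟩
  · exact t.aeval_prod_X_sub_C_apply_eq_zero hv.1 (by rw [hN]; rfl)
  · simpa [pow_succ, hN] using (t.aeval_prod_X_add_C_mem_ker_inf_range_pow hv N).2

end IsSl2Action

section FiniteDimensional

variable {K V : Type*} [Field K] [AddCommGroup V] [Module K V] [FiniteDimensional K V]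

theorem Submodule.finrank_map_add_finrank_inf_ker (f : Module.End K V) (M : Submodule K V) :
    finrank K (M.map f) + finrank K ↥(M ⊓ ker f) = finrank K M := by
  have := LinearMap.finrank_range_add_finrank_ker (f.domRestrict M)
  rwa [range_domRestrict, ker_domRestrict, ← Submodule.finrank_map_subtype_eq,
    Submodule.map_comap_subtype] at this

theorem Submodule.inf_ker_sup_map_eq_of_disjoint {E F : Module.End K V} {M : Submodule K V}
    (hME : M.map E ≤ M) (hMF : M.map F ≤ M) (hEF : Disjoint (ker E) (range F))
    (hFE : Disjoint (ker F) (range E)) : M ⊓ ker E ⊔ M.map F = M := by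
  have hsum : ∀ {A B : Module.End K V}, Disjoint (ker A) (range B) →
      finrank K ↥(M ⊓ ker A ⊔ M.map B) =
        finrank K ↥(M ⊓ ker A) + finrank K (M.map B) := by
    intro A B hAB
    rw [← Submodule.finrank_sup_add_finrank_inf_eq,
      disjoint_iff.mp (hAB.mono inf_le_right map_le_range), finrank_bot, add_zero]
  have hFE_le := Submodule.finrank_mono (sup_le (inf_le_left (b := ker F)) hME)
  rw [hsum hFE] at hFE_le
  refine Submodule.eq_of_le_of_finrank_le (sup_le inf_le_left hMF) ?_
  rw [hsum hEF]
  have := Submodule.finrank_map_add_finrank_inf_ker E M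
  have := Submodule.finrank_map_add_finrank_inf_ker F M
  omega

theorem IsSl2Action.inf_ker_sup_map_eq [CharZero K] {H E F : Module.End K V}
    (t : IsSl2Action H E F) (hE : IsNilpotent E) (hF : IsNilpotent F) {M : Submodule K V}
    (hME : M.map E ≤ M) (hMF : M.map F ≤ M) : M ⊓ ker E ⊔ M.map F = M :=
  Submodule.inf_ker_sup_map_eq_of_disjoint hME hMF (t.disjoint_ker_e_range_f hF)
    (t.symm.disjoint_ker_e_range_f hE)

end FiniteDimensional

section Homogeneous

variable {ι R L : Type*} [DecidableEq ι] [Ring R] [AddCommGroup L] [Module R L]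
  {g : ι → Submodule R L} [Decomposition g]

theorem isHomogeneous_of_eq_iSup_inf {M : Submodule R L} (hM : M = ⨆ i, M ⊓ g i) :
    SetLike.IsHomogeneous g M := by
  intro i m hm
  rw [hM] at hm
  refine Submodule.iSup_induction _ (motive := fun m ↦ (decompose g m i : L) ∈ M) hm
    (fun j m hm ↦ ?_) (by simp) (fun m m' hm hm' ↦ by simpa using M.add_mem hm hm')
  by_cases hji : j = i
  · subst hji
    rw [decompose_of_mem_same g hm.2]
    exact hm.1
  · rw [decompose_of_mem_ne g hm.2 hji]
    exact M.zero_mem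

theorem le_inf_sup_inf_of_isHomogeneous {A : Submodule R L} (hA : SetLike.IsHomogeneous g A)
    (p : ι → Prop) :
    A ≤ A ⊓ (⨆ i, ⨆ (_ : p i), g i) ⊔ A ⊓ (⨆ i, ⨆ (_ : ¬ p i), g i) := by
  classical
  intro m hm
  rw [← sum_support_decompose g m]
  refine Submodule.sum_mem _ fun i _ ↦ ?_
  have hmem : (decompose g m i : L) ∈ g i := (decompose g m i).2
  by_cases hp : p i
  · exact Submodule.mem_sup_left
      ⟨hA i hm, Submodule.mem_iSup_of_mem i (Submodule.mem_iSup_of_mem hp hmem)⟩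
  · exact Submodule.mem_sup_right
      ⟨hA i hm, Submodule.mem_iSup_of_mem i (Submodule.mem_iSup_of_mem hp hmem)⟩

theorem sup_inf_iSup_eq_of_isHomogeneous {A B : Submodule R L} (hA : SetLike.IsHomogeneous g A)
    (hB : SetLike.IsHomogeneous g B) (p : ι → Prop) :
    (A ⊔ B) ⊓ (⨆ i, ⨆ (_ : p i), g i) =
      A ⊓ (⨆ i, ⨆ (_ : p i), g i) ⊔ B ⊓ (⨆ i, ⨆ (_ : p i), g i) := by
  set P := ⨆ i, ⨆ (_ : p i), g i
  set Q := ⨆ i, ⨆ (_ : ¬ p i), g i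
  have hQP : Disjoint Q P :=
    (Decomposition.isInternal g).submodule_iSupIndep.disjoint_biSup_biSup (s := {i | ¬ p i})
      (t := {i | p i}) disjoint_compl_left
  refine le_antisymm ?_ (sup_le (inf_le_inf_right P le_sup_left) (inf_le_inf_right P le_sup_right))
  calc (A ⊔ B) ⊓ P ≤ (A ⊓ P ⊔ B ⊓ P ⊔ Q) ⊓ P :=
        inf_le_inf_right P (sup_le
          ((le_inf_sup_inf_of_isHomogeneous hA p).trans (sup_le_sup le_sup_left inf_le_right))
          ((le_inf_sup_inf_of_isHomogeneous hB p).trans (sup_le_sup le_sup_right inf_le_right)))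
    _ = A ⊓ P ⊔ B ⊓ P := by
        rw [sup_inf_assoc_of_le Q (sup_le inf_le_right inf_le_right), disjoint_iff.mp hQP,
          sup_bot_eq]

variable [AddGroup ι]

theorem decompose_apply_add_of_mapsTo {T : L →ₗ[R] L} {d : ι}
    (hT : ∀ i, ∀ m ∈ g i, T m ∈ g (i + d)) (m : L) (i : ι) :
    (decompose g (T m) (i + d) : L) = T (decompose g m i) := by
  induction m using Decomposition.inductionOn g with
  | zero => simp
  | @homogeneous j m =>
    by_cases hji : j = i
    · subst hji
      rw [decompose_of_mem_same g (hT j m m.2), decompose_of_mem_same g m.2]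
    · rw [decompose_of_mem_ne g (hT j m m.2) (by simpa using hji), decompose_of_mem_ne g m.2 hji,
        map_zero]
  | add m m' hm hm' => simp [hm, hm']

theorem isHomogeneous_inf_ker {M : Submodule R L} (hM : SetLike.IsHomogeneous g M)
    {T : L →ₗ[R] L} {d : ι} (hT : ∀ i, ∀ m ∈ g i, T m ∈ g (i + d)) :
    SetLike.IsHomogeneous g (M ⊓ ker T) := by
  rintro i m ⟨hm, hTm⟩
  refine ⟨hM i hm, ?_⟩
  rw [SetLike.mem_coe, mem_ker, ← decompose_apply_add_of_mapsTo hT, mem_ker.mp hTm,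
    decompose_zero, DirectSum.zero_apply, ZeroMemClass.coe_zero]

theorem isHomogeneous_map {M : Submodule R L} (hM : SetLike.IsHomogeneous g M)
    {T : L →ₗ[R] L} {d : ι} (hT : ∀ i, ∀ m ∈ g i, T m ∈ g (i + d)) :
    SetLike.IsHomogeneous g (M.map T) := by
  rintro i _ ⟨m, hm, rfl⟩
  have := decompose_apply_add_of_mapsTo hT m (i - d)
  rw [sub_add_cancel] at this
  exact this ▸ Submodule.mem_map_of_mem (hM _ hm)

end Homogeneous

theorem isNilpotent_of_mapsTo_add {R L : Type*} [CommRing R] [AddCommGroup L] [Module R L]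
    [IsNoetherian R L] {g : ℤ → Submodule R L} [Decomposition g] {T : Module.End R L} {d : ℤ}
    (hd : d ≠ 0) (hT : ∀ i, ∀ m ∈ g i, T m ∈ g (i + d)) : IsNilpotent T := by
  have hfin : {i | g i ≠ ⊥}.Finite :=
    Submodule.finite_ne_bot_of_iSupIndep (Decomposition.isInternal g).submodule_iSupIndep
  have hpow : ∀ n : ℕ, ∀ i, ∀ m ∈ g i, (T ^ n) m ∈ g (i + n * d) := by
    intro n
    induction n with
    | zero => simp
    | succ n ih =>
      intro i m hm
      rw [pow_succ', Module.End.mul_apply, Nat.cast_succ, add_one_mul, ← add_assoc]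
      exact hT _ _ (ih i m hm)
  rw [Module.End.isNilpotent_iff_of_finite]
  intro m
  induction m using Decomposition.inductionOn g with
  | zero => exact ⟨0, map_zero _⟩
  | @homogeneous i m =>
    obtain ⟨n, hn⟩ : ∃ n : ℕ, g (i + n * d) = ⊥ := by
      by_contra! h
      refine Set.infinite_range_of_injective (f := fun n : ℕ ↦ i + n * d) ?_
        (hfin.subset (Set.range_subset_iff.mpr h))
      intro a b hab
      simpa [hd] using hab
    exact ⟨n, by simpa [hn] using hpow n i m m.2⟩
  | add m m' hm hm' =>
    obtain ⟨n, hn⟩ := hm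
    obtain ⟨n', hn'⟩ := hm'
    exact ⟨n + n', by rw [map_add, Module.End.pow_map_zero_of_le (Nat.le_add_right n n') hn,
      Module.End.pow_map_zero_of_le (Nat.le_add_left n' n) hn', add_zero]⟩

theorem stmt5_general {K L : Type*} [Field K] [CharZero K] [LieRing L] [LieAlgebra K L]
    [FiniteDimensional K L]
    (g : ℤ → Submodule K L)
    (hdsum : DirectSum.IsInternal g)
    (hbr : ∀ i j : ℤ, ∀ u ∈ g i, ∀ v ∈ g j, ⁅u, v⁆ ∈ g (i + j))
    -- the graded `sl₂`-triple `(x, h, y)`: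
    (x h y : L) (hx : x ∈ g (-1)) (hy : y ∈ g 1)
    (hhx : ⁅h, x⁆ = (-2 : K) • x) (hhy : ⁅h, y⁆ = (2 : K) • y) (hyx : ⁅y, x⁆ = h)
    -- `M` is a graded subspace of `𝔤`, invariant under `ad x`, `ad h` and `ad y`:
    (M : Submodule K L)
    (hMgraded : M = ⨆ i : ℤ, M ⊓ g i)
    (hMx : ∀ m ∈ M, ⁅x, m⁆ ∈ M) (hMy : ∀ m ∈ M, ⁅y, m⁆ ∈ M) :
    -- `M ∩ 𝔭` is the internal direct sum of `{u ∈ M ∩ 𝔭 : ⁅u,y⁆ = 0}` and `⁅x, M⁆ ∩ 𝔭`: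
    ((M ⊓ ⨆ i ≥ (0 : ℤ), g i) ⊓ kerRight y) ⊓
        (Submodule.map (LieAlgebra.ad K L x) M ⊓ ⨆ i ≥ (0 : ℤ), g i) = ⊥ ∧
    ((M ⊓ ⨆ i ≥ (0 : ℤ), g i) ⊓ kerRight y) ⊔
        (Submodule.map (LieAlgebra.ad K L x) M ⊓ ⨆ i ≥ (0 : ℤ), g i) =
      M ⊓ ⨆ i ≥ (0 : ℤ), g i := by
  let := hdsum.chooseDecomposition
  have hlie (a b : L) : ⁅LieAlgebra.ad K L a, LieAlgebra.ad K L b⁆ = LieAlgebra.ad K L ⁅a, b⁆ := by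
    ext m
    rw [Ring.lie_def, LieAlgebra.ad_apply, lie_lie]
    rfl
  have t : IsSl2Action (LieAlgebra.ad K L h) (LieAlgebra.ad K L y) (LieAlgebra.ad K L x) :=
    ⟨by rw [hlie, hyx], by rw [hlie, hhy, map_smul], by rw [hlie, hhx, map_smul]⟩
  have hdeg {z : L} {d : ℤ} (hz : z ∈ g d) : ∀ i, ∀ m ∈ g i, LieAlgebra.ad K L z m ∈ g (i + d) :=
    fun i m hm ↦ add_comm d i ▸ hbr d i z hz m hm
  have hF := isNilpotent_of_mapsTo_add (by norm_num) (hdeg hx)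
  have hsplit := t.inf_ker_sup_map_eq (isNilpotent_of_mapsTo_add one_ne_zero (hdeg hy)) hF
    (Submodule.map_le_iff_le_comap.mpr hMy) (Submodule.map_le_iff_le_comap.mpr hMx)
  have hM := isHomogeneous_of_eq_iSup_inf hMgraded
  have hker : kerRight y = ker (LieAlgebra.ad K L y) := by
    ext u
    rw [mem_ker, LieAlgebra.ad_apply, ← lie_skew, neg_eq_zero]
    rfl
  rw [hker]
  refine ⟨disjoint_iff.mp ((t.disjoint_ker_e_range_f hF).mono inf_le_right
    (inf_le_left.trans map_le_range)), ?_⟩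
  rw [inf_right_comm, ← sup_inf_iSup_eq_of_isHomogeneous (isHomogeneous_inf_ker hM (hdeg hy))
    (isHomogeneous_map hM (hdeg hx)), hsplit]

theorem stmt5 {K L : Type*} [Field K] [CharZero K] [LieRing L] [LieAlgebra K L]
    [FiniteDimensional K L]
    (g : ℤ → Submodule K L)
    (hdsum : DirectSum.IsInternal g)
    (hfin : {i : ℤ | g i ≠ ⊥}.Finite)
    (hbr : ∀ i j : ℤ, ∀ u ∈ g i, ∀ v ∈ g j, ⁅u, v⁆ ∈ g (i + j))
    -- the graded `sl₂`-triple `(x, h, y)`: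
    (x h y : L) (hx : x ∈ g (-1)) (hh : h ∈ g 0) (hy : y ∈ g 1)
    (hhx : ⁅h, x⁆ = (-2 : K) • x) (hhy : ⁅h, y⁆ = (2 : K) • y) (hyx : ⁅y, x⁆ = h)
    -- `M` is a graded subspace of `𝔤`, invariant under `ad x`, `ad h` and `ad y`:
    (M : Submodule K L)
    (hMgraded : M = ⨆ i : ℤ, M ⊓ g i)
    (hMx : ∀ m ∈ M, ⁅x, m⁆ ∈ M) (hMh : ∀ m ∈ M, ⁅h, m⁆ ∈ M) (hMy : ∀ m ∈ M, ⁅y, m⁆ ∈ M) :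
    -- `M ∩ 𝔭` is the internal direct sum of `{u ∈ M ∩ 𝔭 : ⁅u,y⁆ = 0}` and `⁅x, M⁆ ∩ 𝔭`:
    ((M ⊓ ⨆ i ≥ (0 : ℤ), g i) ⊓ kerRight y) ⊓
        (Submodule.map (LieAlgebra.ad K L x) M ⊓ ⨆ i ≥ (0 : ℤ), g i) = ⊥ ∧
    ((M ⊓ ⨆ i ≥ (0 : ℤ), g i) ⊓ kerRight y) ⊔
        (Submodule.map (LieAlgebra.ad K L x) M ⊓ ⨆ i ≥ (0 : ℤ), g i) =
      M ⊓ ⨆ i ≥ (0 : ℤ), g i :=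
  stmt5_general g hdsum hbr x h y hx hy hhx hhy hyx M hMgraded hMx hMy
end

section
/- Let W be a normalization space and k ≥ 1. Then the set of all elements u ∈ 𝔤_k satisfying ⁅x,u⁆ ∈ 𝔰_{k-1} + W_{k-1} coincides with 𝔰_k; that is, {u ∈ 𝔤_k : ⁅x,u⁆ ∈ 𝔰_{k-1} + W_{k-1}} = 𝔰_k. -/
theorem Submodule.mem_sup_iff_of_disjoint_sup {R M : Type*} [Ring R] [AddCommGroup M]
    [Module R M] {S T W : Submodule R M} (hW : Disjoint W (S ⊔ T)) {v : M} (hv : v ∈ T) :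
    v ∈ S ⊔ W ↔ v ∈ S := by
  refine ⟨fun h => ?_, fun h => mem_sup_left h⟩
  obtain ⟨s, hs, w, hw, rfl⟩ := mem_sup.mp h
  have hw' : w ∈ S ⊔ T := by
    simpa using sub_mem (mem_sup_right hv) (mem_sup_left hs : s ∈ S ⊔ T)
  rwa [disjoint_def.mp hW w hw hw', add_zero]

theorem sFun_add_one {K L : Type*} [Field K] [LieRing L] [LieAlgebra K L]
    (g : ℤ → Submodule K L) (x : L) {i : ℤ} (hi : -1 ≤ i) :
    sFun g x (i + 1) = g (i + 1) ⊓ (sFun g x i).comap (LieAlgebra.ad K L x) := by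
  rw [sFun, sFun, if_neg (by omega), if_neg (by omega),
    show (i + 1 + 1).toNat = (i + 1).toNat + 1 by omega, sAux, Int.toNat_of_nonneg (by omega)]

theorem stmt9_general {K L : Type*} [Field K] [LieRing L] [LieAlgebra K L]
    (g : ℤ → Submodule K L)
    (x : L)
    -- `W` is a normalization space:
    (W : ℤ → Submodule K L)
    (hWcompl : ∀ i : ℤ, 0 ≤ i →
      W i ⊓ (sFun g x i ⊔ Submodule.map (LieAlgebra.ad K L x) (g (i + 1))) = ⊥ ∧
      W i ⊔ (sFun g x i ⊔ Submodule.map (LieAlgebra.ad K L x) (g (i + 1))) = g i) :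
    ∀ k : ℤ, 1 ≤ k → ∀ u : L,
      (u ∈ g k ∧ ⁅x, u⁆ ∈ sFun g x (k - 1) ⊔ W (k - 1)) ↔ u ∈ sFun g x k := by
  intro k hk u
  obtain ⟨i, hi, rfl⟩ : ∃ i : ℤ, 0 ≤ i ∧ k = i + 1 := ⟨k - 1, by omega, by ring⟩
  have hdisj := disjoint_iff.mpr (hWcompl i hi).1
  rw [sFun_add_one g x (by omega), add_sub_cancel_right, Submodule.mem_inf, Submodule.mem_comap,
    LieAlgebra.ad_apply]
  exact and_congr_right fun hu =>
    Submodule.mem_sup_iff_of_disjoint_sup hdisj (Submodule.mem_map_of_mem hu)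

theorem stmt9 {K L : Type*} [Field K] [CharZero K] [LieRing L] [LieAlgebra K L]
    [FiniteDimensional K L]
    (g : ℤ → Submodule K L)
    (hdsum : DirectSum.IsInternal g)
    (hfin : {i : ℤ | g i ≠ ⊥}.Finite)
    (hbr : ∀ i j : ℤ, ∀ u ∈ g i, ∀ v ∈ g j, ⁅u, v⁆ ∈ g (i + j))
    (x : L) (hx : x ∈ g (-1))
    -- `W` is a normalization space:
    (W : ℤ → Submodule K L) (hW : ∀ i : ℤ, 0 ≤ i → W i ≤ g i)
    (hWcompl : ∀ i : ℤ, 0 ≤ i →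
      W i ⊓ (sFun g x i ⊔ Submodule.map (LieAlgebra.ad K L x) (g (i + 1))) = ⊥ ∧
      W i ⊔ (sFun g x i ⊔ Submodule.map (LieAlgebra.ad K L x) (g (i + 1))) = g i) :
    ∀ k : ℤ, 1 ≤ k → ∀ u : L,
      (u ∈ g k ∧ ⁅x, u⁆ ∈ sFun g x (k - 1) ⊔ W (k - 1)) ↔ u ∈ sFun g x k :=
  stmt9_general g x W hWcompl
end

section
/- Let 𝔰 = span{x, h, y} ⊆ sl(k+1,ℝ) with x = Σ_{i=1}^k E_{i+1,i}, h = diag(k, k-2, …, -k), y = Σ_{i=1}^k i(k+1-i) E_{i,i+1}, let B be the Killing form of sl(k+1,ℝ), 𝔰^⊥ its B-orthogonal complement, and 𝔭 = ⊕_{i≥0} 𝔤_i the upper-triangular (including diagonal) part. Then W := {u ∈ 𝔰^⊥ ∩ 𝔭 : ⁅u, y⁆ = 0} = span{y², y³, …, y^k}, the span of the matrix powers of y from the 2nd to the k-th. -/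
attribute [local instance 100] LieRing.ofAssociativeRing

/-- Matrices supported on the band `b - a = i`. -/
def band (n : ℕ) (i : ℤ) : Submodule ℝ (Matrix (Fin n) (Fin n) ℝ) where
  carrier := {A | ∀ a b : Fin n, ((b : ℤ) - (a : ℤ)) ≠ i → A a b = 0}
  zero_mem' := by intro a b _; rfl
  add_mem' := by
    intro A B hA hB a b hab
    simp [Matrix.add_apply, hA a b hab, hB a b hab]
  smul_mem' := by
    intro c A hA a b hab
    simp [Matrix.smul_apply, hA a b hab]

/-- The regular nilpotent lower shift `x = Σ_{i=1}^k E_{i+1,i}`. -/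
noncomputable def xMat (k : ℕ) : Matrix (Fin (k + 1)) (Fin (k + 1)) ℝ :=
  ∑ i : Fin k, Matrix.single i.succ i.castSucc 1

/-- `h = diag(k, k-2, k-4, …, -k)`. -/
noncomputable def hMat (k : ℕ) : Matrix (Fin (k + 1)) (Fin (k + 1)) ℝ :=
  Matrix.diagonal fun a : Fin (k + 1) => (k : ℝ) - 2 * (a : ℝ)

/-- `y = Σ_{i=1}^k i (k+1-i) E_{i,i+1}`. -/
noncomputable def yMat (k : ℕ) : Matrix (Fin (k + 1)) (Fin (k + 1)) ℝ :=
  ∑ i : Fin k, (((i : ℝ) + 1) * ((k : ℝ) - (i : ℝ))) • Matrix.single i.castSucc i.succ 1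

/-- The Lie algebra `𝔤 = sl(k+1, ℝ)`. -/
noncomputable def slk (k : ℕ) : LieSubalgebra ℝ (Matrix (Fin (k + 1)) (Fin (k + 1)) ℝ) :=
  LieAlgebra.SpecialLinear.sl (Fin (k + 1)) ℝ

/-- The grading `𝔤_i` of `sl(k+1, ℝ)` by diagonals, as subspaces of `sl(k+1, ℝ)`. -/
noncomputable def slkBand (k : ℕ) (i : ℤ) : Submodule ℝ ↥(slk k) :=
  Submodule.comap (slk k).incl.toLinearMap (band (k + 1) i)

/-- The orthogonal complement `{u : B(u, s) = 0 for all s ∈ S}` of a subspace `S`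
with respect to a bilinear form `B`. -/
def perpOf {K L : Type*} [Field K] [AddCommGroup L] [Module K L]
    (B : LinearMap.BilinForm K L) (S : Submodule K L) : Submodule K L where
  carrier := {u : L | ∀ s ∈ S, B u s = 0}
  zero_mem' := by intro s hs; simp
  add_mem' := by
    intro a b ha hb s hs
    rw [map_add, LinearMap.add_apply, ha s hs, hb s hs, add_zero]
  smul_mem' := by
    intro c a ha s hs
    rw [map_smul, LinearMap.smul_apply, ha s hs, smul_zero]

/-!
With 0-based indices, `y` is the weighted shift `y_{a,a+1} = (a+1)(k-a)`, whose weights are all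
nonzero, so every matrix commuting with it is a polynomial `∑_{m ≤ k} t_m y^m`. On `sl(k+1)` the
Killing form is `2(k+1) tr(uv)`, and `y^m ∈ 𝔤_m`, `x ∈ 𝔤_{-1}`, `h ∈ 𝔤_0`; since `tr(AB) = 0`
for `A ∈ 𝔤_i`, `B ∈ 𝔤_j` with `i + j ≠ 0`, tracelessness of `u` forces `t_0 = 0` and
`B(u, x) = 0` forces `t_1 = 0` (as `tr(yx) > 0`). Conversely `y^m` with `m ≥ 2` lies in `𝔤_m`,
commutes with `y` and is trace-orthogonal to `x`, `h` and `y` for degree reasons.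
-/

namespace Matrix

variable {ι R : Type*} [Fintype ι] [DecidableEq ι] [CommRing R]

lemma trace_linearMap_eq_sum_single (f : Matrix ι ι R →ₗ[R] Matrix ι ι R) :
    LinearMap.trace R _ f = ∑ i, ∑ j, f (single i j 1) i j := by
  rw [LinearMap.trace_eq_matrix_trace R (stdBasis R ι ι), Matrix.trace, Fintype.sum_prod_type]
  simp only [diag_apply, LinearMap.toMatrix_apply, stdBasis_eq_single]
  rfl

lemma trace_mulLeftRight (X Y : Matrix ι ι R) :
    LinearMap.trace R _ (LinearMap.mulLeftRight R (X, Y)) = X.trace * Y.trace := by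
  simp [trace_linearMap_eq_sum_single, mul_apply, single, trace, Finset.sum_mul_sum, ite_and]

lemma trace_ad_comp_ad (A B : Matrix ι ι R) :
    LinearMap.trace R _ (LieAlgebra.ad R _ A ∘ₗ LieAlgebra.ad R _ B) =
      2 * Fintype.card ι * (A * B).trace - 2 * A.trace * B.trace := by
  have : LieAlgebra.ad R _ A ∘ₗ LieAlgebra.ad R _ B =
      LinearMap.mulLeftRight R (A * B, 1) - LinearMap.mulLeftRight R (A, B) -
        LinearMap.mulLeftRight R (B, A) + LinearMap.mulLeftRight R (1, B * A) := by
    ext1 M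
    simp only [LinearMap.comp_apply, LieAlgebra.ad_apply, Ring.lie_def, LinearMap.add_apply,
      LinearMap.sub_apply, LinearMap.mulLeftRight_apply]
    noncomm_ring
  rw [this]
  simp only [map_add, map_sub, trace_mulLeftRight, trace_one, trace_mul_comm B A]
  ring

end Matrix

open LieAlgebra.SpecialLinear in
lemma killingForm_sl_apply {ι K : Type*} [Fintype ι] [DecidableEq ι] [Field K]
    (u v : sl ι K) :
    killingForm K (sl ι K) u v = 2 * Fintype.card ι * ((u : Matrix ι ι K) * v).trace := by
  have hu : (u : Matrix ι ι K).trace = 0 := u.2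
  have hmem : ∀ M, (LieAlgebra.ad K _ (u : Matrix ι ι K) ∘ₗ
      LieAlgebra.ad K _ (v : Matrix ι ι K)) M ∈ (sl ι K).toSubmodule := by
    intro M
    show Matrix.trace _ = 0
    simp [Ring.lie_def, Matrix.trace_mul_comm (u : Matrix ι ι K)]
  calc killingForm K (sl ι K) u v
      = LinearMap.trace K (sl ι K).toSubmodule ((LieAlgebra.ad K _ (u : Matrix ι ι K) ∘ₗ
          LieAlgebra.ad K _ (v : Matrix ι ι K)).restrict fun M _ ↦ hmem M) := rfl
    _ = 2 * Fintype.card ι * ((u : Matrix ι ι K) * v).trace := by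
      rw [LinearMap.trace_restrict_eq_of_forall_mem _ _ hmem, Matrix.trace_ad_comp_ad, hu]
      ring

lemma killingForm_slk_eq_zero_iff {k : ℕ} (u v : slk k) :
    killingForm ℝ (slk k) u v = 0 ↔ ((u : Matrix (Fin (k + 1)) (Fin (k + 1)) ℝ) * v).trace = 0 := by
  rw [show killingForm ℝ (slk k) u v = _ from killingForm_sl_apply u v]
  simp [Nat.cast_add_one_ne_zero]

lemma mem_perpOf_span_iff {K L : Type*} [Field K] [AddCommGroup L] [Module K L]
    (B : LinearMap.BilinForm K L) (s : Set L) (u : L) :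
    u ∈ perpOf B (Submodule.span K s) ↔ ∀ v ∈ s, B u v = 0 :=
  ⟨fun h v hv ↦ h v (Submodule.subset_span hv),
    fun h _ hv ↦ Submodule.span_le (p := LinearMap.ker (B u)) |>.mpr h hv⟩

lemma mem_kerRight_iff_commute {K A : Type*} [Field K] [Ring A] [Algebra K A]
    (L : LieSubalgebra K A) (u y : L) : u ∈ kerRight (K := K) y ↔ Commute (u : A) y := by
  change ⁅u, y⁆ = 0 ↔ _
  rw [← Subtype.coe_inj, LieSubalgebra.coe_bracket, Ring.lie_def, ZeroMemClass.coe_zero,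
    sub_eq_zero]
  rfl

section Band

variable {n : ℕ} {i j : ℤ} {A B : Matrix (Fin n) (Fin n) ℝ}

lemma trace_eq_zero_of_mem_band (hA : A ∈ band n i) (hi : i ≠ 0) : A.trace = 0 :=
  Finset.sum_eq_zero fun a _ ↦ hA a a (by simpa using hi.symm)

lemma mul_mem_band (hA : A ∈ band n i) (hB : B ∈ band n j) : A * B ∈ band n (i + j) := by
  intro a b hab
  rw [Matrix.mul_apply]
  refine Finset.sum_eq_zero fun c _ ↦ ?_
  by_cases hac : (c : ℤ) - a = i
  · rw [hB c b (by omega), mul_zero]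
  · rw [hA a c hac, zero_mul]

lemma trace_mul_eq_zero_of_mem_band (hA : A ∈ band n i) (hB : B ∈ band n j) (hij : i + j ≠ 0) :
    (A * B).trace = 0 :=
  trace_eq_zero_of_mem_band (mul_mem_band hA hB) hij

lemma diagonal_mem_band_zero (d : Fin n → ℝ) : Matrix.diagonal d ∈ band n 0 :=
  fun _ _ hab ↦ Matrix.diagonal_apply_ne _ fun h ↦ hab (by simp [h])

end Band

section WeightedShift

variable {K : Type*} [Field K]

def weightedShift (n : ℕ) (c : ℕ → K) : Matrix (Fin n) (Fin n) K :=
  Matrix.of fun a b ↦ if (b : ℕ) = a + 1 then c a else 0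

lemma weightedShift_pow_apply (n : ℕ) (c : ℕ → K) (m : ℕ) (a b : Fin n) :
    (weightedShift n c ^ m) a b =
      if (b : ℕ) = a + m then ∏ j ∈ Finset.range m, c (a + j) else 0 := by
  induction m generalizing b with
  | zero => simp [Matrix.one_apply, Fin.ext_iff, eq_comm]
  | succ m ih =>
    rw [pow_succ, Matrix.mul_apply]
    simp_rw [ih, weightedShift, Matrix.of_apply]
    by_cases h : (a : ℕ) + m < n
    · rw [Finset.sum_eq_single ⟨a + m, h⟩
        (fun c _ hc ↦ by rw [if_neg fun h ↦ hc (Fin.ext h), zero_mul]) (by simp)]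
      by_cases hb : (b : ℕ) = a + (m + 1)
      · simp [hb, Finset.prod_range_succ, add_assoc]
      · simp [hb, show (b : ℕ) ≠ a + m + 1 by omega]
    · rw [if_neg (by omega)]
      exact Finset.sum_eq_zero fun c _ ↦ by rw [if_neg (by omega), zero_mul]

lemma weightedShift_mul_apply_castSucc {n : ℕ} (c : ℕ → K)
    (u : Matrix (Fin (n + 1)) (Fin (n + 1)) K) (i : Fin n) (b : Fin (n + 1)) :
    (weightedShift (n + 1) c * u) i.castSucc b = c i * u i.succ b := by
  rw [Matrix.mul_apply, Finset.sum_eq_single i.succ (fun d _ hd ↦ ?_) (by simp)]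
  · simp [weightedShift]
  · rw [weightedShift, Matrix.of_apply, if_neg fun h ↦ hd (Fin.ext (by simpa using h)), zero_mul]

variable {n : ℕ} {c : ℕ → K}

lemma eq_zero_of_commute_weightedShift (hc : ∀ j < n, c j ≠ 0)
    {u : Matrix (Fin (n + 1)) (Fin (n + 1)) K} (hu : Commute u (weightedShift (n + 1) c))
    (h0 : ∀ b, u 0 b = 0) : u = 0 := by
  suffices ∀ a b, u a b = 0 from Matrix.ext this
  intro a
  induction a using Fin.induction with
  | zero => exact h0
  | succ i ih =>
    intro b
    have h := congrFun (congrFun hu.eq i.castSucc) b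
    rw [weightedShift_mul_apply_castSucc, Matrix.mul_apply,
      Finset.sum_eq_zero fun d _ ↦ by rw [ih d, zero_mul]] at h
    exact (mul_eq_zero.mp h.symm).resolve_left (hc i i.isLt)

lemma exists_eq_sum_smul_pow_of_commute_weightedShift (hc : ∀ j < n, c j ≠ 0)
    {u : Matrix (Fin (n + 1)) (Fin (n + 1)) K} (hu : Commute u (weightedShift (n + 1) c)) :
    ∃ t : Fin (n + 1) → K, u = ∑ m, t m • weightedShift (n + 1) c ^ (m : ℕ) := by
  set P : ℕ → K := fun m ↦ ∏ j ∈ Finset.range m, c j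
  have hP : ∀ m : Fin (n + 1), P m ≠ 0 := fun m ↦
    Finset.prod_ne_zero_iff.mpr fun j hj ↦ hc j (by have := Finset.mem_range.mp hj; omega)
  set w := ∑ m : Fin (n + 1), (u 0 m / P m) • weightedShift (n + 1) c ^ (m : ℕ)
  have hw : Commute w (weightedShift (n + 1) c) :=
    Commute.sum_left _ _ _ fun m _ ↦ ((Commute.refl _).pow_left _).smul_left _
  have hw0 : ∀ b, w 0 b = u 0 b := by
    intro b
    simp [w, Matrix.sum_apply, weightedShift_pow_apply, Fin.val_inj, P, hP]
  exact ⟨_, sub_eq_zero.mp <| eq_zero_of_commute_weightedShift hc (hu.sub_left hw) fun b ↦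
    sub_eq_zero.mpr (hw0 b).symm⟩

end WeightedShift

lemma weightedShift_pow_mem_band (n : ℕ) (c : ℕ → ℝ) (m : ℕ) :
    weightedShift n c ^ m ∈ band n m := fun a b hab ↦ by
  rw [weightedShift_pow_apply, if_neg (by omega)]

lemma trace_sum_smul_weightedShift_pow_mul {n : ℕ} {c : ℕ → ℝ} (t : Fin n → ℝ) (j : Fin n)
    {i : ℤ} {X : Matrix (Fin n) (Fin n) ℝ} (hX : X ∈ band n i) (hji : (j : ℤ) + i = 0) :
    ((∑ m, t m • weightedShift n c ^ (m : ℕ)) * X).trace =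
      t j * (weightedShift n c ^ (j : ℕ) * X).trace := by
  rw [Finset.sum_mul, Matrix.trace_sum, Finset.sum_eq_single j (fun m _ hm ↦ ?_) (by simp),
    smul_mul_assoc, Matrix.trace_smul, smul_eq_mul]
  have : (m : ℕ) ≠ j := Fin.val_injective.ne hm
  rw [smul_mul_assoc, Matrix.trace_smul,
    trace_mul_eq_zero_of_mem_band (weightedShift_pow_mem_band n c m) hX (by omega), smul_zero]

noncomputable def yWeight (k j : ℕ) : ℝ := ((j : ℝ) + 1) * (k - j)

lemma yMat_eq_weightedShift (k : ℕ) : yMat k = weightedShift (k + 1) (yWeight k) := by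
  ext a b
  induction a using Fin.lastCases with
  | last => simp [yMat, weightedShift, Matrix.sum_apply, b.isLt.ne]
  | cast j =>
    simp only [yMat, weightedShift, Matrix.sum_apply, Matrix.smul_apply, Matrix.single_apply,
      Fin.castSucc_inj, ite_and, Matrix.of_apply]
    rw [Finset.sum_eq_single j (fun c _ hc ↦ by simp [hc]) (by simp)]
    simp [yWeight, Fin.ext_iff, eq_comm]

lemma yWeight_pos {k j : ℕ} (hj : j < k) : 0 < yWeight k j := by
  have : (j : ℝ) < k := by exact_mod_cast hj
  have : (0 : ℝ) < k - j := by linarith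
  unfold yWeight
  positivity

lemma yMat_pow_mem_band (k m : ℕ) : yMat k ^ m ∈ band (k + 1) m :=
  yMat_eq_weightedShift k ▸ weightedShift_pow_mem_band _ _ m

lemma yMat_mem_band (k : ℕ) : yMat k ∈ band (k + 1) 1 := by
  simpa using yMat_pow_mem_band k 1

lemma xMat_apply (k : ℕ) (a b : Fin (k + 1)) :
    xMat k a b = if (a : ℕ) = b + 1 then 1 else 0 := by
  induction b using Fin.lastCases with
  | last => simp [xMat, Matrix.sum_apply, a.isLt.ne]
  | cast j =>
    simp only [xMat, Matrix.sum_apply, Matrix.single_apply, Fin.castSucc_inj, ite_and]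
    rw [Finset.sum_eq_single j (fun c _ hc ↦ by simp [hc]) (by simp)]
    simp [Fin.ext_iff, eq_comm]

lemma xMat_mem_band (k : ℕ) : xMat k ∈ band (k + 1) (-1) := fun a b hab ↦ by
  rw [xMat_apply, if_neg (by omega)]

lemma hMat_mem_band (k : ℕ) : hMat k ∈ band (k + 1) 0 := diagonal_mem_band_zero _

lemma trace_yMat_mul_xMat_pos {k : ℕ} (hk : 1 ≤ k) : 0 < (yMat k * xMat k).trace := by
  have hlast : (weightedShift (k + 1) (yWeight k) * xMat k)
      (Fin.last k) (Fin.last k) = 0 :=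
    Matrix.mul_apply.trans <| Finset.sum_eq_zero fun d _ ↦ by simp [weightedShift, d.isLt.ne]
  have : Nonempty (Fin k) := ⟨⟨0, hk⟩⟩
  rw [yMat_eq_weightedShift, Matrix.trace, Fin.sum_univ_castSucc]
  simp only [Matrix.diag_apply, weightedShift_mul_apply_castSucc, xMat_apply, hlast]
  simpa using Finset.sum_pos (fun i _ ↦ yWeight_pos i.isLt) Finset.univ_nonempty

lemma mem_span_yMat_pow_of_commute {k : ℕ} (hk : 1 ≤ k) {U : Matrix (Fin (k + 1)) (Fin (k + 1)) ℝ}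
    (hU : U.trace = 0) (hUx : (U * xMat k).trace = 0) (hUy : Commute U (yMat k)) :
    U ∈ Submodule.span ℝ {A | ∃ m : ℕ, 2 ≤ m ∧ m ≤ k ∧ A = yMat k ^ m} := by
  rw [yMat_eq_weightedShift] at hUy
  obtain ⟨t, rfl⟩ := exists_eq_sum_smul_pow_of_commute_weightedShift
    (fun j hj ↦ (yWeight_pos hj).ne') hUy
  have ht0 : t 0 = 0 := by
    have h := trace_sum_smul_weightedShift_pow_mul (c := yWeight k) t 0
      (diagonal_mem_band_zero fun _ ↦ 1) (by simp)
    rw [Matrix.diagonal_one, mul_one, mul_one, hU] at h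
    simpa [Nat.cast_add_one_ne_zero] using h
  have ht1 : t ⟨1, by omega⟩ = 0 := by
    rw [trace_sum_smul_weightedShift_pow_mul t ⟨1, by omega⟩ (xMat_mem_band k) (by simp),
      ← yMat_eq_weightedShift, pow_one] at hUx
    exact (mul_eq_zero.mp hUx).resolve_right (trace_yMat_mul_xMat_pos hk).ne'
  refine Submodule.sum_mem _ fun m _ ↦ ?_
  obtain rfl | rfl | hm : m = 0 ∨ m = ⟨1, by omega⟩ ∨ 2 ≤ (m : ℕ) := by
    simp only [Fin.ext_iff, Fin.val_zero]; omega
  · simp [ht0]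
  · simp [ht1]
  · rw [← yMat_eq_weightedShift]
    exact Submodule.smul_mem _ _ (Submodule.subset_span ⟨m, hm, by omega, rfl⟩)

theorem stmt13 (k : ℕ) (hk : 1 ≤ k)
    -- `x`, `h`, `y` viewed as elements of `sl(k+1, ℝ)`:
    (xe he ye : ↥(slk k))
    (hxe : (xe : Matrix (Fin (k + 1)) (Fin (k + 1)) ℝ) = xMat k)
    (hhe : (he : Matrix (Fin (k + 1)) (Fin (k + 1)) ℝ) = hMat k)
    (hye : (ye : Matrix (Fin (k + 1)) (Fin (k + 1)) ℝ) = yMat k) :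
    -- `W := {u ∈ 𝔰^⊥ ∩ 𝔭 : ⁅u, y⁆ = 0} = span{y², y³, …, y^k}`:
    Submodule.map (slk k).incl.toLinearMap
      (perpOf (killingForm ℝ ↥(slk k)) (Submodule.span ℝ {xe, he, ye}) ⊓
        (⨆ i ≥ (0 : ℤ), slkBand k i) ⊓ kerRight ye) =
    Submodule.span ℝ {A : Matrix (Fin (k + 1)) (Fin (k + 1)) ℝ |
      ∃ m : ℕ, 2 ≤ m ∧ m ≤ k ∧ A = yMat k ^ m} := by
  apply le_antisymm
  · rintro _ ⟨u, ⟨⟨hperp, -⟩, hcomm⟩, rfl⟩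
    refine mem_span_yMat_pow_of_commute hk u.2 ?_ (hye ▸ (mem_kerRight_iff_commute _ u ye).mp hcomm)
    rw [← hxe]
    exact (killingForm_slk_eq_zero_iff u xe).mp (hperp xe (Submodule.subset_span (by simp)))
  · rw [Submodule.span_le]
    rintro _ ⟨m, hm, -, rfl⟩
    have hym := yMat_pow_mem_band k m
    set U : slk k := ⟨yMat k ^ m, trace_eq_zero_of_mem_band hym (by omega)⟩
    have hU : (U : Matrix (Fin (k + 1)) (Fin (k + 1)) ℝ) = yMat k ^ m := rfl
    refine ⟨U, ⟨⟨(mem_perpOf_span_iff _ _ _).mpr ?_, ?_⟩, ?_⟩, hU⟩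
    · rintro v (rfl | rfl | rfl) <;> rw [killingForm_slk_eq_zero_iff, hU]
      · rw [hxe]; exact trace_mul_eq_zero_of_mem_band hym (xMat_mem_band k) (by omega)
      · rw [hhe]; exact trace_mul_eq_zero_of_mem_band hym (hMat_mem_band k) (by omega)
      · rw [hye]; exact trace_mul_eq_zero_of_mem_band hym (yMat_mem_band k) (by omega)
    · exact Submodule.mem_iSup_of_mem (m : ℤ) (Submodule.mem_iSup_of_mem (by positivity) hym)
    · rw [SetLike.mem_coe, mem_kerRight_iff_commute, hU, hye]
      exact (Commute.refl _).pow_left m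
end
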